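/- arXiv:2404.16217 — 2 statements merged into one kernel-verified Lean document; each statement's English description precedes it below -/
import Mathlib

section
/- In the set-cover reduction graph G, any set cover S of (U,𝔉) gives a (λ,k)-FT-BFP H of G in which each sink v_j has in-degree exactly λ(|S| + k): H keeps all edges of G except that the in-edges of each v_j are restricted to those from A = ⋃_{i=1}^λ ({y_{i,W} : W ∈ S} ∪ Z_i). -/
open Finset

/-- `p` is a nonempty directed path/walk (as a list of edges) from `s` to `t`
using only edges of `G`. -/
def IsPath {V : Type*} (G : Finset (V × V)) (s t : V) (p : List (V × V)) : Prop :=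
  p ≠ [] ∧ (∀ e ∈ p, e ∈ G) ∧ List.Chain' (fun e f => e.2 = f.1) p ∧
    p.head?.map Prod.fst = some s ∧ p.getLast?.map Prod.snd = some t

/-- `G` contains `r` pairwise edge-disjoint paths from `s` to `t` (unit capacities). -/
def EDP {V : Type*} (G : Finset (V × V)) (s t : V) (r : ℕ) : Prop :=
  ∃ ps : Fin r → List (V × V), (∀ i, IsPath G s t (ps i)) ∧
    ∀ i j, i ≠ j → ∀ e, e ∈ ps i → e ∉ ps j

/-- Max-flow with unit capacities: the maximum number of edge-disjoint `s`-`t` paths. -/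
noncomputable def maxFlow {V : Type*} (G : Finset (V × V)) (s t : V) : ℕ :=
  sSup {r | EDP G s t r}

/-- Directed reachability in the edge set `G`. -/
def Reach {V : Type*} (G : Finset (V × V)) (s t : V) : Prop :=
  Relation.ReflTransGen (fun a b => (a, b) ∈ G) s t

def inEdges {V : Type*} [DecidableEq V] (G : Finset (V × V)) (v : V) : Finset (V × V) :=
  G.filter fun e => e.2 = v

def outDeg {V : Type*} [DecidableEq V] (G : Finset (V × V)) (v : V) : ℕ :=
  (G.filter fun e => e.1 = v).card

/-- `H` is a `(lam, k)` fault-tolerant bounded-flow-preserver of `G` w.r.t. source `s`: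
for every set `F` of at most `k` failed edges and every vertex `t`, the `s`-`t` max-flow
of `H \ F` equals that of `G \ F` whenever the latter is at most `lam`, and is at least
`lam` otherwise. -/
def IsFTBFP {V : Type*} [DecidableEq V] (G H : Finset (V × V)) (s : V) (lam k : ℕ) : Prop :=
  H ⊆ G ∧ ∀ F : Finset (V × V), F.card ≤ k → ∀ t : V,
    (maxFlow (G \ F) s t ≤ lam → maxFlow (H \ F) s t = maxFlow (G \ F) s t) ∧
    (lam < maxFlow (G \ F) s t → lam ≤ maxFlow (H \ F) s t)

/-- `H` is a `j`-fault-tolerant reachability subgraph of `G` w.r.t. source `s`. -/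
def IsFTRS {V : Type*} [DecidableEq V] (G H : Finset (V × V)) (s : V) (j : ℕ) : Prop :=
  H ⊆ G ∧ ∀ F : Finset (V × V), F.card ≤ j → ∀ t : V,
    (Reach (H \ F) s t ↔ Reach (G \ F) s t)

def IsCut {V : Type*} (A : Finset V) (s t : V) : Prop := s ∈ A ∧ t ∉ A

/-- Number of edges of `G` from `A` to its complement. -/
def cutVal {V : Type*} [DecidableEq V] (G : Finset (V × V)) (A : Finset V) : ℕ :=
  (G.filter fun e => e.1 ∈ A ∧ e.2 ∉ A).card

def IsMinCut {V : Type*} [DecidableEq V] (G : Finset (V × V)) (s t : V) (A : Finset V) : Prop :=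
  IsCut A s t ∧ ∀ B : Finset V, IsCut B s t → cutVal G A ≤ cutVal G B

def IsCutS {V : Type*} (S : Finset V) (t : V) (A : Finset V) : Prop := S ⊆ A ∧ t ∉ A

def IsMinCutS {V : Type*} [DecidableEq V] (G : Finset (V × V)) (S : Finset V) (t : V)
    (A : Finset V) : Prop :=
  IsCutS S t A ∧ ∀ B : Finset V, IsCutS S t B → cutVal G A ≤ cutVal G B

/-- Farthest min-cut: the min-cut whose source side contains the source side of
every min-cut. -/
def IsFMC {V : Type*} [DecidableEq V] (G : Finset (V × V)) (S : Finset V) (t : V)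
    (A : Finset V) : Prop :=
  IsMinCutS G S t A ∧ ∀ B : Finset V, IsMinCutS G S t B → B ⊆ A

/-- Vertices outside `A` with an in-edge from `A`. -/
def outSet {V : Type*} [DecidableEq V] (G : Finset (V × V)) (A : Finset V) : Finset V :=
  (G.filter fun e => e.1 ∈ A ∧ e.2 ∉ A).image Prod.snd

open scoped Classical

/-- Vertices of the set-cover reduction graph: the source `s`; the nodes of `lam`
disjoint complete binary trees of height `u` (heap-indexed, leaves correspond to the
elements of `U`); the vertices `ℓ(x_i)` (`false`) and `r(x_i)` (`true`); the set
vertices `y_{i,W}` (`W` indexed by `ι`); the `u+1` vertices of each `Z_i`; and the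
`N` sink vertices `v_1, …, v_N`. -/
abbrev SCV (lam u N : ℕ) (U ι : Type*) :=
  Unit ⊕ (Fin lam × Fin (2 ^ (u + 1) - 1)) ⊕ (Fin lam × U × Bool) ⊕ (Fin lam × ι) ⊕
    (Fin lam × Fin (u + 1)) ⊕ Fin N

variable {lam u N : ℕ} {U ι : Type*}

def yV (i : Fin lam) (w : ι) : SCV lam u N U ι :=
  Sum.inr (Sum.inr (Sum.inr (Sum.inl (i, w))))

def zV (i : Fin lam) (c : Fin (u + 1)) : SCV lam u N U ι :=
  Sum.inr (Sum.inr (Sum.inr (Sum.inr (Sum.inl (i, c)))))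

def sinkV (j : Fin N) : SCV lam u N U ι :=
  Sum.inr (Sum.inr (Sum.inr (Sum.inr (Sum.inr j))))

/-- Edges of the set-cover reduction graph (sets `Sw : ι → Finset U`, the bijection
`elem` identifies the `2^u` heap leaves with the elements of `U`): `s → r_i`; the
tree edges; each leaf `x_i` to `ℓ(x_i)` and `r(x_i)`; `ℓ(x_i) → y_{i,W}` iff
`x ∈ W`; `r(x_i) → Z_i` (all of it); and every vertex of `Y_i ∪ Z_i` to every
sink `v_j`. -/
def scEdge (lam u N : ℕ) (U ι : Type*) (Sw : ι → Finset U) (elem : Fin (2 ^ u) ≃ U) :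
    SCV lam u N U ι × SCV lam u N U ι → Prop := fun e =>
  match e with
  | (Sum.inl _, Sum.inr (Sum.inl (_, a))) => (a : ℕ) = 0
  | (Sum.inr (Sum.inl (i, a)), Sum.inr (Sum.inl (i2, b))) =>
      i = i2 ∧ ((b : ℕ) = 2 * (a : ℕ) + 1 ∨ (b : ℕ) = 2 * (a : ℕ) + 2)
  | (Sum.inr (Sum.inl (i, a)), Sum.inr (Sum.inr (Sum.inl (i2, x, _)))) =>
      i = i2 ∧ ∃ j : Fin (2 ^ u), (a : ℕ) = 2 ^ u - 1 + (j : ℕ) ∧ elem j = x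
  | (Sum.inr (Sum.inr (Sum.inl (i, x, false))), Sum.inr (Sum.inr (Sum.inr (Sum.inl (i2, w))))) =>
      i = i2 ∧ x ∈ Sw w
  | (Sum.inr (Sum.inr (Sum.inl (i, _, true))), Sum.inr (Sum.inr (Sum.inr (Sum.inr (Sum.inl (i2, _)))))) =>
      i = i2
  | (Sum.inr (Sum.inr (Sum.inr (Sum.inl _))), Sum.inr (Sum.inr (Sum.inr (Sum.inr (Sum.inr _))))) =>
      True
  | (Sum.inr (Sum.inr (Sum.inr (Sum.inr (Sum.inl _)))), Sum.inr (Sum.inr (Sum.inr (Sum.inr (Sum.inr _))))) =>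
      True
  | _ => False

noncomputable def scGraph (lam u N : ℕ) (U ι : Type*) [Fintype U] [Fintype ι]
    (Sw : ι → Finset U) (elem : Fin (2 ^ u) ≃ U) :
    Finset (SCV lam u N U ι × SCV lam u N U ι) :=
  Finset.univ.filter (scEdge lam u N U ι Sw elem)

/-!
`H` differs from `G` only in the in-edges of the sinks, so `s`-`t` paths avoiding the failed
edges `F` carry over verbatim unless `t` is a sink `v_j`. Edge-disjoint paths to `v_j` start with
distinct edges `s → root(B_i)`, so it suffices to find, for every such `i` with a surviving
`s`-`v_j` path, a surviving path to `v_j` in `H` inside the `i`-th copy of the gadget. Such a path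
reaches some leaf of `B_i`; if `b` edges of `B_i` have failed, a prefix count shows that at least
`u + 1 - b` leaves of `B_i` stay reachable. From these leaves `H` offers one route through a set
`y_{i,W}` covering the first leaf and routes through distinct vertices of `Z_i`; these routes are
pairwise edge-disjoint and avoid the tree edges, so blocking all of them would take more than
`u + 1` failures.
-/

section Flow

variable {V : Type*} {S S' : Finset (V × V)} {a b c s t : V} {p : List (V × V)}

theorem IsPath.single (h : (a, b) ∈ S) : IsPath S a b [(a, b)] := by
  refine ⟨List.cons_ne_nil _ _, ?_, List.isChain_singleton _, rfl, rfl⟩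
  simpa using h

theorem IsPath.cons (h : (a, b) ∈ S) (hp : IsPath S b c p) : IsPath S a c ((a, b) :: p) := by
  obtain ⟨hne, hmem, hchain, hhead, hlast⟩ := hp
  obtain ⟨f, q, rfl⟩ := List.exists_cons_of_ne_nil hne
  refine ⟨List.cons_ne_nil _ _, ?_, ?_, rfl, by simpa using hlast⟩
  · simpa [h] using hmem
  · exact List.isChain_cons_cons.2 ⟨by simpa using hhead.symm, hchain⟩

theorem IsPath.of_cons {e : V × V} (hp : IsPath S a c (e :: p)) :
    e.1 = a ∧ e ∈ S ∧ (p = [] ∧ e.2 = c ∨ IsPath S e.2 c p) := by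
  obtain ⟨-, hmem, hchain, hhead, hlast⟩ := hp
  refine ⟨by simpa using hhead, hmem e List.mem_cons_self, ?_⟩
  rcases p with _ | ⟨f, q⟩
  · exact Or.inl ⟨rfl, by simpa using hlast⟩
  · refine Or.inr ⟨List.cons_ne_nil _ _, fun x hx => hmem x (List.mem_cons_of_mem _ hx),
      hchain.tail, ?_, by simpa using hlast⟩
    simpa using (List.isChain_cons_cons.1 hchain).1.symm

theorem exists_isPath_of_transGen (h : Relation.TransGen (fun x y => (x, y) ∈ S) a b) :
    ∃ p, IsPath S a b p := by
  induction h using Relation.TransGen.head_induction_on with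
  | single h => exact ⟨_, IsPath.single h⟩
  | head h _ ih =>
    obtain ⟨p, hp⟩ := ih
    exact ⟨_, hp.cons h⟩

theorem IsPath.mono (hS : S ⊆ S') (hp : IsPath S a b p) : IsPath S' a b p :=
  ⟨hp.1, fun e he => hS (hp.2.1 e he), hp.2.2⟩

theorem IsPath.reach (hp : IsPath S a b p) : Reach S a b := by
  induction p generalizing a with
  | nil => exact absurd rfl hp.1
  | cons e p ih =>
    obtain ⟨rfl, he, hrest⟩ := hp.of_cons
    rcases hrest with ⟨-, rfl⟩ | hrest
    · exact Relation.ReflTransGen.single he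
    · exact Relation.ReflTransGen.head he (ih hrest)

theorem IsPath.eq_of_mem_of_snd_eq {v : V} (hv : ∀ w, (v, w) ∉ S) (hp : IsPath S a b p)
    {e : V × V} (he : e ∈ p) (hev : e.2 = v) : b = v := by
  induction p generalizing a with
  | nil => exact absurd he List.not_mem_nil
  | cons f p ih =>
    obtain ⟨-, -, hrest⟩ := hp.of_cons
    rcases hrest with ⟨rfl, rfl⟩ | hrest
    · rwa [← List.mem_singleton.1 he]
    · rcases List.mem_cons.1 he with rfl | he
      · obtain ⟨g, q, rfl⟩ := List.exists_cons_of_ne_nil hrest.1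
        obtain ⟨hg, hgS, -⟩ := hrest.of_cons
        exact absurd (hev ▸ hg ▸ hgS) (hv g.2)
      · exact ih hrest he

theorem EDP.mono {r : ℕ} (hS : S ⊆ S') : EDP S s t r → EDP S' s t r :=
  fun ⟨ps, hps, hdisj⟩ => ⟨ps, fun m => (hps m).mono hS, hdisj⟩

theorem edp_of_isPath_filter {α : Type*} [DecidableEq α] {r : ℕ} (lbl : V × V → α) (c : Fin r → α)
    (hc : Function.Injective c) (ps : Fin r → List (V × V))
    (hps : ∀ m, IsPath (S.filter fun e => lbl e = c m) s t (ps m)) : EDP S s t r := by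
  refine ⟨ps, fun m => (hps m).mono (Finset.filter_subset _ _), fun m m' hm e he he' => hm ?_⟩
  have hl : ∀ m, e ∈ ps m → lbl e = c m := fun m h => (Finset.mem_filter.1 ((hps m).2.1 e h)).2
  exact hc ((hl m he).symm.trans (hl m' he'))

theorem isFTBFP_of_edp_imp [DecidableEq V] {G H : Finset (V × V)} {lam k : ℕ} (hHG : H ⊆ G)
    (h : ∀ F : Finset (V × V), F.card ≤ k → ∀ t r, EDP (G \ F) s t r → EDP (H \ F) s t r) :
    IsFTBFP G H s lam k := by
  refine ⟨hHG, fun F hF t => ?_⟩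
  have hflow : maxFlow (H \ F) s t = maxFlow (G \ F) s t := by
    unfold maxFlow
    congr 1
    ext r
    exact ⟨EDP.mono (Finset.sdiff_subset_sdiff hHG le_rfl), h F hF t r⟩
  exact ⟨fun _ => hflow, fun hlt => hflow ▸ hlt.le⟩

end Flow

theorem Finset.card_add_card_le_of_hitting {β κ : Type*} [Fintype κ] {A F : Finset β}
    (route : κ → Finset β) (hAF : A ⊆ F) (hdisj : Pairwise (Function.onFun Disjoint route))
    (hA : ∀ k, Disjoint A (route k)) (hhit : ∀ k, ∃ e ∈ route k, e ∈ F) :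
    A.card + Fintype.card κ ≤ F.card := by
  classical
  choose sel hsel hselF using hhit
  have hinj : Function.Injective sel := fun k k' h => by
    by_contra hne
    exact Finset.disjoint_left.1 (hdisj hne) (hsel k) (h ▸ hsel k')
  have hdisjA : Disjoint A (Finset.univ.image sel) := by
    simp only [Finset.disjoint_right, Finset.mem_image, Finset.mem_univ, true_and]
    rintro _ ⟨k, rfl⟩
    exact Finset.disjoint_right.1 (hA k) (hsel k)
  calc A.card + Fintype.card κ = (A ∪ Finset.univ.image sel).card := by
        rw [Finset.card_union_of_disjoint hdisjA, Finset.card_image_of_injective _ hinj,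
          Finset.card_univ]
    _ ≤ F.card := Finset.card_le_card <| Finset.union_subset hAF fun e he => by
        obtain ⟨k, -, rfl⟩ := Finset.mem_image.1 he
        exact hselF k

section BinaryWords

/-- Heap numbering of the binary tree, as in `scEdge`: a node is named by the word `l` of
turns from the root, the root `[]` is `0` and the children of `a` are `2a + 1` and `2a + 2`. -/
def heapIdx (l : List Bool) : ℕ := l.foldl (fun a b => 2 * a + 1 + b.toNat) 0

def heapWord : ℕ → List Bool
  | 0 => []
  | a + 1 => heapWord (a / 2) ++ [a % 2 == 1]

@[simp] theorem heapIdx_nil : heapIdx [] = 0 := rfl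

@[simp] theorem heapIdx_concat (l : List Bool) (b : Bool) :
    heapIdx (l ++ [b]) = 2 * heapIdx l + 1 + b.toNat := by
  simp [heapIdx, List.foldl_append]

theorem heapIdx_heapWord (a : ℕ) : heapIdx (heapWord a) = a := by
  induction a using Nat.strong_induction_on with
  | _ a ih =>
    rcases a with _ | a
    · simp [heapWord]
    · rw [heapWord, heapIdx_concat, ih _ (by omega)]
      rcases Nat.mod_two_eq_zero_or_one a with h | h <;> simp [h] <;> omega

theorem heapWord_heapIdx (l : List Bool) : heapWord (heapIdx l) = l := by
  induction l using List.reverseRecOn with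
  | nil => simp [heapWord]
  | append_singleton l b ih =>
    rw [heapIdx_concat, show 2 * heapIdx l + 1 + b.toNat = (2 * heapIdx l + b.toNat) + 1 by ring,
      heapWord]
    cases b <;> simp [Nat.mul_add_div, ih]

theorem heapIdx_injective : Function.Injective heapIdx :=
  Function.LeftInverse.injective heapWord_heapIdx

theorem heapIdx_succ_mem_Ico (l : List Bool) :
    2 ^ l.length ≤ heapIdx l + 1 ∧ heapIdx l + 1 < 2 ^ (l.length + 1) := by
  induction l using List.reverseRecOn with
  | nil => simp
  | append_singleton l b ih =>
    have := b.toNat_le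
    simp only [heapIdx_concat, List.length_append, List.length_singleton, pow_succ] at ih ⊢
    omega

theorem heapIdx_succ_lt_two_pow_iff {l : List Bool} {n : ℕ} :
    heapIdx l + 1 < 2 ^ (n + 1) ↔ l.length ≤ n := by
  obtain ⟨h₁, h₂⟩ := heapIdx_succ_mem_Ico l
  refine ⟨fun h => ?_, fun h => h₂.trans_le (Nat.pow_le_pow_right two_pos (by omega))⟩
  have := (Nat.pow_lt_pow_iff_right one_lt_two).1 (h₁.trans_lt h)
  omega

theorem two_pow_le_heapIdx_succ_iff {l : List Bool} {n : ℕ} :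
    2 ^ n ≤ heapIdx l + 1 ↔ n ≤ l.length := by
  obtain ⟨h₁, h₂⟩ := heapIdx_succ_mem_Ico l
  refine ⟨fun h => ?_, fun h => (Nat.pow_le_pow_right two_pos h).trans h₁⟩
  have := (Nat.pow_lt_pow_iff_right one_lt_two).1 (h.trans_lt h₂)
  omega

/-- Split at the first letter: either `Bad` also cuts into the other subtree, which costs an
element of `Bad` not counted below, or that subtree contributes a surviving word of its own. -/
theorem exists_words_avoiding_prefixes (Bad : Finset (List Bool)) (l₀ : List Bool)
    (h₀ : ∀ t ∈ Bad, ¬ t <+: l₀) :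
    ∃ R : Finset (List Bool), (∀ l ∈ R, l.length = l₀.length ∧ ∀ t ∈ Bad, ¬ t <+: l) ∧
      l₀.length + 1 ≤ R.card + Bad.card := by
  induction l₀ generalizing Bad with
  | nil => exact ⟨{[]}, by simpa using h₀, by simp⟩
  | cons b l₀ ih =>
    have hcons : Set.InjOn (List.cons b) (List.cons b ⁻¹' Bad) := List.cons_injective.injOn
    obtain ⟨R, hR, hcard⟩ := ih (Bad.preimage (List.cons b) hcons) fun t ht hpre =>
      h₀ _ (Finset.mem_preimage.1 ht) (List.cons_prefix_cons.2 ⟨rfl, hpre⟩)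
    have hnil : [] ∉ Bad := fun h => h₀ [] h List.nil_prefix
    have hRb : ∀ l ∈ R, ∀ t ∈ Bad, ¬ t <+: b :: l := by
      rintro l hl (_ | ⟨c, t⟩) ht hpre
      · exact hnil ht
      · obtain ⟨rfl, hpre'⟩ := List.cons_prefix_cons.1 hpre
        exact (hR l hl).2 t (Finset.mem_preimage.2 ht) hpre'
    have hRb' : ∀ l ∈ R, (b :: l).length = (b :: l₀).length ∧ ∀ t ∈ Bad, ¬ t <+: b :: l :=
      fun l hl => ⟨by simp [(hR l hl).1], hRb l hl⟩
    have hinj := (List.cons_injective (a := b)).injOn (s := ↑(Bad.preimage (List.cons b) hcons))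
    by_cases hother : ∃ t ∈ Bad, t.head? = some (!b)
    · obtain ⟨t, ht, hhead⟩ := hother
      have hle : (Bad.preimage (List.cons b) hcons).card ≤ (Bad.erase t).card := by
        refine Finset.card_le_card_of_injOn _ (fun t' ht' => ?_) hinj
        simp only [Finset.coe_preimage, Set.mem_preimage, Finset.coe_erase, Set.mem_sdiff,
          Finset.mem_coe, Set.mem_singleton_iff] at ht' ⊢
        exact ⟨ht', by rintro rfl; simp at hhead⟩
      refine ⟨R.map ⟨List.cons b, List.cons_injective⟩, by simpa using hRb', ?_⟩
      have := Finset.card_erase_add_one ht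
      simp only [Finset.card_map, List.length_cons]
      omega
    · push Not at hother
      set w := (!b) :: List.replicate l₀.length false
      have hw : w ∉ R.map ⟨List.cons b, List.cons_injective⟩ := by simp [w]
      have hwBad : ∀ t ∈ Bad, ¬ t <+: w := by
        rintro (_ | ⟨c, t⟩) ht hpre
        · exact hnil ht
        · obtain ⟨rfl, -⟩ := List.cons_prefix_cons.1 hpre
          exact hother _ ht rfl
      have hle : (Bad.preimage (List.cons b) hcons).card ≤ Bad.card :=
        Finset.card_le_card_of_injOn _ (fun t' ht' => by simpa using ht') hinj
      refine ⟨insert w (R.map ⟨List.cons b, List.cons_injective⟩), ?_, ?_⟩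
      · intro l hl
        rcases Finset.mem_insert.1 hl with rfl | hl
        · exact ⟨by simp [w], hwBad⟩
        · obtain ⟨l', hl', rfl⟩ := Finset.mem_map.1 hl
          exact hRb' l' hl'
      · rw [Finset.card_insert_of_notMem hw, Finset.card_map, List.length_cons]
        omega

end BinaryWords

namespace SetCoverReduction

variable {Sw : ι → Finset U} {elem : Fin (2 ^ u) ≃ U} {Scov : Finset ι}
  {F : Finset (SCV lam u N U ι × SCV lam u N U ι)}

local notation "𝒢" => scGraph lam u N U ι Sw elem

def treeV (i : Fin lam) (a : Fin (2 ^ (u + 1) - 1)) : SCV lam u N U ι := Sum.inr (Sum.inl (i, a))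

/-- `xV i x false` is `ℓ(x_i)` and `xV i x true` is `r(x_i)`. -/
def xV (i : Fin lam) (x : U) (b : Bool) : SCV lam u N U ι := Sum.inr (Sum.inr (Sum.inl (i, x, b)))

/-- The heap index is reduced modulo the size of the tree, so this is junk unless
`l.length ≤ u`. -/
def node (i : Fin lam) (l : List Bool) : SCV lam u N U ι :=
  treeV i ⟨heapIdx l % (2 ^ (u + 1) - 1),
    Nat.mod_lt _ (Nat.sub_pos_of_lt (Nat.one_lt_two_pow (by omega)))⟩

def treeInEdge (i : Fin lam) (l : List Bool) : SCV lam u N U ι × SCV lam u N U ι :=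
  (if l = [] then Sum.inl () else node i l.dropLast, node i l)

/-- The leaf `l` has heap index `2 ^ u - 1 + k` and carries `elem k` (junk unless
`l.length = u`). -/
def leafElem (elem : Fin (2 ^ u) ≃ U) (l : List Bool) : U :=
  elem ⟨(heapIdx l + 1 - 2 ^ u) % 2 ^ u, Nat.mod_lt _ (Nat.two_pow_pos u)⟩

def gadgetIdx : SCV lam u N U ι → Option (Fin lam)
  | Sum.inr (Sum.inl (i, _)) => some i
  | Sum.inr (Sum.inr (Sum.inl (i, _))) => some i
  | Sum.inr (Sum.inr (Sum.inr (Sum.inl (i, _)))) => some i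
  | Sum.inr (Sum.inr (Sum.inr (Sum.inr (Sum.inl (i, _))))) => some i
  | _ => none

def edgeGadgetIdx (e : SCV lam u N U ι × SCV lam u N U ι) : Option (Fin lam) :=
  (gadgetIdx e.1).or (gadgetIdx e.2)

theorem heapIdx_lt_of_length_le {l : List Bool} (hl : l.length ≤ u) :
    heapIdx l < 2 ^ (u + 1) - 1 := by
  have := heapIdx_succ_lt_two_pow_iff.2 hl
  omega

theorem node_eq {l : List Bool} (hl : l.length ≤ u) (i : Fin lam) :
    (node i l : SCV lam u N U ι) = treeV i ⟨heapIdx l, heapIdx_lt_of_length_le hl⟩ := by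
  simp [node, Nat.mod_eq_of_lt (heapIdx_lt_of_length_le hl)]

theorem node_inj {l l' : List Bool} (hl : l.length ≤ u) (hl' : l'.length ≤ u) {i i' : Fin lam} :
    (node i l : SCV lam u N U ι) = node i' l' ↔ i = i' ∧ l = l' := by
  refine ⟨fun h => ?_, by rintro ⟨rfl, rfl⟩; rfl⟩
  simp only [node, treeV, Sum.inr.injEq, Sum.inl.injEq, Prod.mk.injEq, Fin.mk.injEq,
    Nat.mod_eq_of_lt (heapIdx_lt_of_length_le hl),
    Nat.mod_eq_of_lt (heapIdx_lt_of_length_le hl')] at h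
  exact ⟨h.1, heapIdx_injective h.2⟩

section Edges

variable [Fintype U] [Fintype ι]

theorem mem_scGraph {e : SCV lam u N U ι × SCV lam u N U ι} :
    e ∈ 𝒢 ↔ scEdge lam u N U ι Sw elem e := by
  simp [scGraph]

theorem treeInEdge_mem {l : List Bool} (hl : l.length ≤ u) (i : Fin lam) :
    treeInEdge i l ∈ 𝒢 := by
  induction l using List.reverseRecOn with
  | nil => simp [treeInEdge, mem_scGraph, node, treeV, scEdge]
  | append_singleton l b _ =>
    simp only [List.length_append, List.length_singleton] at hl
    rw [treeInEdge, if_neg (by simp), List.dropLast_concat, mem_scGraph,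
      node_eq (by omega), node_eq (by simpa using hl)]
    cases b <;> simp [scEdge, treeV]

theorem leaf_mem {l : List Bool} (hl : l.length = u) (i : Fin lam) (b : Bool) :
    (node i l, xV i (leafElem elem l) b) ∈ 𝒢 := by
  obtain ⟨h₁, h₂⟩ := heapIdx_succ_mem_Ico l
  rw [hl] at h₁ h₂
  rw [pow_succ] at h₂
  rw [node_eq hl.le, mem_scGraph]
  refine ⟨rfl, _, ?_, rfl⟩
  simp only [Nat.mod_eq_of_lt (show heapIdx l + 1 - 2 ^ u < 2 ^ u by omega)]
  omega

theorem xV_yV_mem {x : U} {w : ι} (hx : x ∈ Sw w) (i : Fin lam) :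
    (xV i x false, yV i w) ∈ 𝒢 :=
  mem_scGraph.2 ⟨rfl, hx⟩

theorem xV_zV_mem (i : Fin lam) (x : U) (c : Fin (u + 1)) : (xV i x true, zV i c) ∈ 𝒢 :=
  mem_scGraph.2 rfl

theorem eq_treeInEdge_of_mem {l : List Bool} (hl : l.length ≤ u) {i : Fin lam}
    {v : SCV lam u N U ι} (h : (v, node i l) ∈ 𝒢) : (v, node i l) = treeInEdge i l := by
  rw [node_eq hl, mem_scGraph] at h
  rcases v with _ | ⟨i', a⟩ | ⟨i', x, _ | _⟩ | _ | _ | _ <;> simp [scEdge, treeV] at h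
  · rw [heapIdx_injective (h.trans heapIdx_nil.symm)]
    rfl
  · obtain ⟨rfl, h⟩ := h
    obtain rfl | ⟨l, b, rfl⟩ := List.eq_nil_or_concat l
    · simp at h
    rw [List.concat_eq_append] at h hl ⊢
    have hl' : l.length ≤ u := by simp at hl; omega
    have ha : a = ⟨heapIdx l, heapIdx_lt_of_length_le hl'⟩ :=
      Fin.ext (show (a : ℕ) = heapIdx l by cases b <;> simp at h <;> omega)
    rw [treeInEdge, if_neg (by simp), List.dropLast_concat, node_eq (l := l) hl', ha]
    rfl

theorem exists_node_nil_of_mem {v : SCV lam u N U ι} (h : (Sum.inl (), v) ∈ 𝒢) :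
    ∃ i, v = node i [] := by
  rw [mem_scGraph] at h
  rcases v with _ | ⟨i, a⟩ | ⟨i', x, _ | _⟩ | _ | _ | _ <;> simp [scEdge] at h
  exact ⟨i, by rw [node_eq (by simp)]; exact congrArg (treeV i) (Fin.ext h)⟩

theorem sinkV_not_mem (j : Fin N) (w : SCV lam u N U ι) : (sinkV j, w) ∉ 𝒢 := by
  rw [mem_scGraph]
  rcases w with _ | _ | ⟨i', x, _ | _⟩ | _ | _ | _ <;> simp [scEdge, sinkV]

theorem exists_treeV_or_leaf_of_mem {i : Fin lam} {a : Fin (2 ^ (u + 1) - 1)} {w : SCV lam u N U ι}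
    (h : (treeV i a, w) ∈ 𝒢) :
    (∃ b, w = treeV i b) ∨
      ∃ l : List Bool, l.length = u ∧ (treeV i a : SCV lam u N U ι) = node i l := by
  rw [mem_scGraph] at h
  rcases w with _ | ⟨i', b⟩ | ⟨i', x, bb⟩ | _ | _ | _ <;> simp [scEdge, treeV] at h
  · exact Or.inl ⟨b, by rw [h.1]; rfl⟩
  · obtain ⟨-, k, hk, -⟩ := h
    have hlen : (heapWord a).length = u := by
      have h₁ : 2 ^ u ≤ heapIdx (heapWord a) + 1 := by rw [heapIdx_heapWord]; omega
      have h₂ : heapIdx (heapWord a) + 1 < 2 ^ (u + 1) := by rw [heapIdx_heapWord]; omega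
      exact le_antisymm (heapIdx_succ_lt_two_pow_iff.1 h₂) (two_pow_le_heapIdx_succ_iff.1 h₁)
    refine Or.inr ⟨heapWord a, hlen, ?_⟩
    rw [node_eq hlen.le]
    simp [heapIdx_heapWord]

end Edges

noncomputable def yRoute (elem : Fin (2 ^ u) ≃ U) (i : Fin lam) (j : Fin N) (l : List Bool)
    (w : ι) : Finset (SCV lam u N U ι × SCV lam u N U ι) :=
  {(node i l, xV i (leafElem elem l) false), (xV i (leafElem elem l) false, yV i w),
    (yV i w, sinkV j)}

noncomputable def zRoute (elem : Fin (2 ^ u) ≃ U) (i : Fin lam) (j : Fin N) (l : List Bool)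
    (c : Fin (u + 1)) : Finset (SCV lam u N U ι × SCV lam u N U ι) :=
  {(node i l, xV i (leafElem elem l) true), (xV i (leafElem elem l) true, zV i c),
    (zV i c, sinkV j)}

theorem disjoint_yRoute_zRoute (i : Fin lam) (j : Fin N) (l l' : List Bool) (w : ι)
    (c : Fin (u + 1)) : Disjoint (yRoute elem i j l w) (zRoute elem i j l' c) := by
  simp [Finset.disjoint_left, yRoute, zRoute, node, treeV, xV, yV, zV, sinkV]

theorem disjoint_zRoute_zRoute {l l' : List Bool} (hl : l.length ≤ u) (hl' : l'.length ≤ u)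
    (hll' : l ≠ l') {c c' : Fin (u + 1)} (hcc' : c ≠ c') (i : Fin lam) (j : Fin N) :
    Disjoint (zRoute elem i j l c : Finset (SCV lam u N U ι × _)) (zRoute elem i j l' c') := by
  simp [Finset.disjoint_left, zRoute, node_inj hl hl', hll', hcc', xV, zV, sinkV]

theorem treeInEdge_not_mem_yRoute (i i' : Fin lam) (t : List Bool) (j : Fin N) (l : List Bool)
    (w : ι) : (treeInEdge i t : SCV lam u N U ι × _) ∉ yRoute elem i' j l w := by
  simp [yRoute, treeInEdge, Prod.ext_iff, node, treeV, xV, yV, sinkV]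

theorem treeInEdge_not_mem_zRoute (i i' : Fin lam) (t : List Bool) (j : Fin N) (l : List Bool)
    (c : Fin (u + 1)) : (treeInEdge i t : SCV lam u N U ι × _) ∉ zRoute elem i' j l c := by
  simp [zRoute, treeInEdge, Prod.ext_iff, node, treeV, xV, zV, sinkV]

theorem exists_surviving_leaves (i : Fin lam)
    {l₀ : List Bool} (hl₀ : l₀.length = u) (h₀ : ∀ t, t <+: l₀ → treeInEdge i t ∉ F) :
    ∃ R : Finset (List Bool), (∀ l ∈ R, l.length = u ∧ ∀ t, t <+: l → treeInEdge i t ∉ F) ∧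
      u + 1 ≤ R.card + (F.filter fun e => ∃ t, e = treeInEdge i t).card := by
  let Bad := ((Finset.range (2 ^ (u + 1) - 1)).image heapWord).filter fun t => treeInEdge i t ∈ F
  have mem_Bad : ∀ t, t ∈ Bad ↔ t.length ≤ u ∧ treeInEdge i t ∈ F := by
    intro t
    simp only [Bad, Finset.mem_filter, Finset.mem_image, Finset.mem_range]
    refine and_congr_left' ⟨?_, fun h => ⟨_, heapIdx_lt_of_length_le h, heapWord_heapIdx t⟩⟩
    rintro ⟨a, ha, rfl⟩
    rw [← heapIdx_succ_lt_two_pow_iff, heapIdx_heapWord]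
    omega
  obtain ⟨R, hR, hcard⟩ := exists_words_avoiding_prefixes Bad l₀
    fun t ht hpre => h₀ t hpre ((mem_Bad t).1 ht).2
  have hBad : Bad.card ≤ (F.filter fun e => ∃ t, e = treeInEdge i t).card := by
    refine Finset.card_le_card_of_injOn (treeInEdge i) (fun t ht => ?_) fun t ht t' ht' h => ?_
    · exact Finset.mem_filter.2 ⟨((mem_Bad t).1 ht).2, t, rfl⟩
    · exact ((node_inj ((mem_Bad t).1 ht).1 ((mem_Bad t').1 ht').1).1 (congrArg Prod.snd h)).2
  refine ⟨R, fun l hl => ?_, by omega⟩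
  obtain ⟨hlen, hpre⟩ := hR l hl
  rw [hl₀] at hlen
  exact ⟨hlen, fun t ht htF => hpre t ((mem_Bad t).2 ⟨ht.length_le.trans hlen.le, htF⟩) ht⟩

section Cover

variable [Fintype U] [Fintype ι]

noncomputable def coverGraph (Sw : ι → Finset U) (elem : Fin (2 ^ u) ≃ U) (Scov : Finset ι) :
    Finset (SCV lam u N U ι × SCV lam u N U ι) :=
  (scGraph lam u N U ι Sw elem).filter fun e =>
    (∃ j : Fin N, e.2 = sinkV j) →
      ((∃ i : Fin lam, ∃ w ∈ Scov, e.1 = yV i w) ∨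
        (∃ i : Fin lam, ∃ c : Fin (u + 1), e.1 = zV i c))

noncomputable def gadget (Sw : ι → Finset U) (elem : Fin (2 ^ u) ≃ U) (Scov : Finset ι)
    (F : Finset (SCV lam u N U ι × SCV lam u N U ι)) (i : Fin lam) :
    Finset (SCV lam u N U ι × SCV lam u N U ι) :=
  (coverGraph Sw elem Scov \ F).filter fun e => edgeGadgetIdx e = some i

theorem mem_coverGraph_of_forall_ne {e : SCV lam u N U ι × SCV lam u N U ι}
    (he : e ∈ 𝒢) (h : ∀ j, e.2 ≠ sinkV j) : e ∈ coverGraph Sw elem Scov :=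
  Finset.mem_filter.2 ⟨he, fun ⟨j, hj⟩ => absurd hj (h j)⟩

theorem mem_gadget {i : Fin lam} {e : SCV lam u N U ι × SCV lam u N U ι} :
    e ∈ gadget Sw elem Scov F i ↔
      e ∈ coverGraph Sw elem Scov ∧ e ∉ F ∧ edgeGadgetIdx e = some i := by
  simp [gadget, and_assoc]

theorem treeInEdge_not_mem_of_reach {i : Fin lam} {l : List Bool} (hl : l.length ≤ u)
    (h : Reach (𝒢 \ F) (Sum.inl ()) (node i l)) :
    treeInEdge i l ∉ F ∧ Reach (𝒢 \ F) (Sum.inl ()) (treeInEdge i l).1 := by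
  obtain heq | ⟨c, hc, hedge⟩ := h.cases_tail
  · exact absurd heq (by simp [node, treeV])
  obtain ⟨hedge, hnot⟩ := Finset.mem_sdiff.1 hedge
  rw [← eq_treeInEdge_of_mem hl hedge]
  exact ⟨hnot, hc⟩

theorem forall_treeInEdge_not_mem_of_reach {i : Fin lam} {l : List Bool} (hl : l.length ≤ u)
    (h : Reach (𝒢 \ F) (Sum.inl ()) (node i l)) :
    ∀ t, t <+: l → treeInEdge i t ∉ F := by
  induction l using List.reverseRecOn with
  | nil => exact fun t ht => List.prefix_nil.1 ht ▸ (treeInEdge_not_mem_of_reach hl h).1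
  | append_singleton l b ih =>
    obtain ⟨hnot, hreach⟩ := treeInEdge_not_mem_of_reach hl h
    rw [treeInEdge, if_neg (by simp), List.dropLast_concat] at hreach
    intro t ht
    rcases List.prefix_concat_iff.1 ht with rfl | ht
    · exact hnot
    · exact ih (by simp at hl; omega) hreach t ht

theorem reach_leaf_of_reach_treeV {i : Fin lam} {a : Fin (2 ^ (u + 1) - 1)} {v : SCV lam u N U ι}
    (h : Reach (𝒢 \ F) (treeV i a) v) :
    (∃ b, v = treeV i b) ∨ ∃ l, l.length = u ∧ Reach (𝒢 \ F) (treeV i a) (node i l) := by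
  induction h with
  | refl => exact Or.inl ⟨a, rfl⟩
  | tail hreach hvw ih =>
    rcases ih with ⟨b, rfl⟩ | hleaf
    · rcases exists_treeV_or_leaf_of_mem (Finset.mem_sdiff.1 hvw).1 with ⟨b', rfl⟩ | ⟨l, hl, hb⟩
      · exact Or.inl ⟨b', rfl⟩
      · exact Or.inr ⟨l, hl, hb ▸ hreach⟩
    · exact Or.inr hleaf

theorem transGen_gadget_node (Scov : Finset ι) {i : Fin lam} {l : List Bool} (hl : l.length ≤ u)
    (h : ∀ t, t <+: l → treeInEdge i t ∉ F) :
    Relation.TransGen (fun a b => (a, b) ∈ gadget Sw elem Scov F i) (Sum.inl ()) (node i l) := by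
  have hmem : ∀ t, t <+: l → treeInEdge i t ∈ gadget Sw elem Scov F i := fun t ht => by
    refine mem_gadget.2 ⟨mem_coverGraph_of_forall_ne (treeInEdge_mem (ht.length_le.trans hl) i)
      fun j => ?_, h t ht, ?_⟩
    · simp [treeInEdge, node, treeV, sinkV]
    · by_cases ht : t = [] <;> simp [edgeGadgetIdx, treeInEdge, ht, node, treeV, gadgetIdx]
  induction l using List.reverseRecOn with
  | nil => exact Relation.TransGen.single (hmem [] List.nil_prefix)
  | append_singleton l b ih =>
    have := hmem (l ++ [b]) List.prefix_rfl
    rw [treeInEdge, if_neg (by simp), List.dropLast_concat] at this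
    exact (ih (by simp at hl; omega) (fun t ht => h t (ht.trans (List.prefix_append _ _)))
      (fun t ht => hmem t (ht.trans (List.prefix_append _ _)))).tail this

theorem yV_sinkV_mem_coverGraph {w : ι} (hw : w ∈ Scov) (i : Fin lam) (j : Fin N) :
    (yV i w, sinkV j) ∈ coverGraph Sw elem Scov :=
  Finset.mem_filter.2 ⟨mem_scGraph.2 trivial, fun _ => Or.inl ⟨i, w, hw, rfl⟩⟩

theorem zV_sinkV_mem_coverGraph (Scov : Finset ι) (i : Fin lam) (c : Fin (u + 1)) (j : Fin N) :
    (zV i c, sinkV j) ∈ coverGraph Sw elem Scov :=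
  Finset.mem_filter.2 ⟨mem_scGraph.2 trivial, fun _ => Or.inr ⟨i, c, rfl⟩⟩

theorem exists_mem_yRoute_mem_of_not_transGen {i : Fin lam} {j : Fin N}
    (hno : ¬ Relation.TransGen (fun a b => (a, b) ∈ gadget Sw elem Scov F i) (Sum.inl ()) (sinkV j))
    {l : List Bool} (hl : l.length = u) (hsurv : ∀ t, t <+: l → treeInEdge i t ∉ F) {w : ι}
    (hw : w ∈ Scov) (hlw : leafElem elem l ∈ Sw w) : ∃ e ∈ yRoute elem i j l w, e ∈ F := by
  by_contra! hfree
  refine hno ((((transGen_gadget_node Scov hl.le hsurv).tail (c := xV i (leafElem elem l) false)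
    ?_).tail (c := yV i w) ?_).tail ?_) <;>
    refine mem_gadget.2 ⟨?_, hfree _ (by simp [yRoute]),
      by simp [edgeGadgetIdx, gadgetIdx, node, treeV, xV, yV]⟩
  · exact mem_coverGraph_of_forall_ne (leaf_mem hl i false) (by simp [xV, sinkV])
  · exact mem_coverGraph_of_forall_ne (xV_yV_mem hlw i) (by simp [yV, sinkV])
  · exact yV_sinkV_mem_coverGraph hw i j

theorem exists_mem_zRoute_mem_of_not_transGen {i : Fin lam} {j : Fin N}
    (hno : ¬ Relation.TransGen (fun a b => (a, b) ∈ gadget Sw elem Scov F i) (Sum.inl ()) (sinkV j))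
    {l : List Bool} (hl : l.length = u) (hsurv : ∀ t, t <+: l → treeInEdge i t ∉ F)
    (c : Fin (u + 1)) : ∃ e ∈ zRoute elem i j l c, e ∈ F := by
  by_contra! hfree
  refine hno ((((transGen_gadget_node Scov hl.le hsurv).tail (c := xV i (leafElem elem l) true)
    ?_).tail (c := zV i c) ?_).tail ?_) <;>
    refine mem_gadget.2 ⟨?_, hfree _ (by simp [zRoute]),
      by simp [edgeGadgetIdx, gadgetIdx, node, treeV, xV, zV]⟩
  · exact mem_coverGraph_of_forall_ne (leaf_mem hl i true) (by simp [xV, sinkV])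
  · exact mem_coverGraph_of_forall_ne (xV_zV_mem i _ c) (by simp [zV, sinkV])
  · exact zV_sinkV_mem_coverGraph Scov i c j

theorem transGen_gadget_sinkV (hScov : ∀ x : U, ∃ w ∈ Scov, x ∈ Sw w) (hF : F.card ≤ u + 1)
    (i : Fin lam) (j : Fin N) {l₀ : List Bool} (hl₀ : l₀.length = u)
    (h₀ : ∀ t, t <+: l₀ → treeInEdge i t ∉ F) :
    Relation.TransGen (fun a b => (a, b) ∈ gadget Sw elem Scov F i) (Sum.inl ()) (sinkV j) := by
  by_contra hno
  obtain ⟨R, hR, hcard⟩ := exists_surviving_leaves i hl₀ h₀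
  obtain ⟨w₀, hw₀, hxw₀⟩ := hScov (leafElem elem l₀)
  -- one route through `Y_i` from `l₀`, and routes through distinct vertices of `Z_i` from
  -- `min (u + 1) |R|` distinct surviving leaves: `F` meets each of them
  let n := min (u + 1) R.card
  let g : Fin n → List Bool := fun m => R.equivFin.symm (Fin.castLE (min_le_right _ _) m)
  have hg : ∀ m, (g m).length = u ∧ ∀ t, t <+: g m → treeInEdge i t ∉ F :=
    fun m => hR _ (R.equivFin.symm _).2
  have hginj : g.Injective := fun m m' h =>
    Fin.castLE_injective _ (R.equivFin.symm.injective (Subtype.ext h))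
  let route : Option (Fin n) → Finset (SCV lam u N U ι × SCV lam u N U ι) := fun k =>
    k.elim (yRoute elem i j l₀ w₀) fun m => zRoute elem i j (g m) (Fin.castLE (min_le_left _ _) m)
  have key := Finset.card_add_card_le_of_hitting route
    (Finset.filter_subset (fun e => ∃ t, e = treeInEdge i t) F) ?_ ?_ ?_
  · rw [Fintype.card_option, Fintype.card_fin] at key
    omega
  · rintro (_ | m) (_ | m') hne
    · exact absurd rfl hne
    · exact disjoint_yRoute_zRoute i j _ _ _ _
    · exact (disjoint_yRoute_zRoute i j _ _ _ _).symm
    · have hmm : m ≠ m' := fun h => hne (h ▸ rfl)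
      exact disjoint_zRoute_zRoute (hg m).1.le (hg m').1.le (hginj.ne hmm)
        ((Fin.castLE_injective _).ne hmm) i j
  · rintro k
    simp only [Finset.disjoint_left, Finset.mem_filter]
    rintro _ ⟨-, t, rfl⟩
    cases k with
    | none => exact treeInEdge_not_mem_yRoute i i t j l₀ w₀
    | some m => exact treeInEdge_not_mem_zRoute i i t j _ _
  · rintro (_ | m)
    · exact exists_mem_yRoute_mem_of_not_transGen hno hl₀ h₀ hw₀ hxw₀
    · exact exists_mem_zRoute_mem_of_not_transGen hno (hg m).1 (hg m).2 _

theorem exists_isPath_gadget (hScov : ∀ x : U, ∃ w ∈ Scov, x ∈ Sw w) (hF : F.card ≤ u + 1)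
    {j : Fin N} {p : List (SCV lam u N U ι × SCV lam u N U ι)}
    (hp : IsPath (𝒢 \ F) (Sum.inl ()) (sinkV j) p) :
    ∃ i, (Sum.inl (), node i []) ∈ p ∧
      ∃ q, IsPath (gadget Sw elem Scov F i) (Sum.inl ()) (sinkV j) q := by
  obtain ⟨f, rest, rfl⟩ := List.exists_cons_of_ne_nil hp.1
  obtain ⟨hf₁, hfS, hrest⟩ := hp.of_cons
  have hfG : (Sum.inl (), f.2) ∈ 𝒢 := hf₁ ▸ (Finset.mem_sdiff.1 hfS).1
  obtain ⟨i, hf₂⟩ := exists_node_nil_of_mem hfG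
  obtain rfl : f = (Sum.inl (), node i []) := Prod.ext hf₁ hf₂
  have hreach : Reach (𝒢 \ F) (node i []) (sinkV j) := by
    rcases hrest with ⟨-, h⟩ | h
    · exact absurd h (by simp [node, treeV, sinkV])
    · exact h.reach
  rw [node_eq (by simp)] at hreach
  obtain ⟨b, hb⟩ | ⟨l, hl, hleaf⟩ := reach_leaf_of_reach_treeV hreach
  · exact absurd hb (by simp [treeV, sinkV])
  rw [← node_eq (by simp)] at hleaf
  exact ⟨i, List.mem_cons_self, exists_isPath_of_transGen <|
    transGen_gadget_sinkV hScov hF i j hl <| forall_treeInEdge_not_mem_of_reach hl.le (.head hfS hleaf)⟩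

theorem edp_coverGraph_of_edp (hScov : ∀ x : U, ∃ w ∈ Scov, x ∈ Sw w) (hF : F.card ≤ u + 1)
    {t : SCV lam u N U ι} {r : ℕ} (h : EDP (𝒢 \ F) (Sum.inl ()) t r) :
    EDP (coverGraph Sw elem Scov \ F) (Sum.inl ()) t r := by
  obtain ⟨ps, hps, hdisj⟩ := h
  by_cases ht : ∃ j, t = sinkV j
  · obtain ⟨j, rfl⟩ := ht
    choose i hi q hq using fun m => exists_isPath_gadget hScov hF (hps m)
    refine edp_of_isPath_filter edgeGadgetIdx (fun m => some (i m)) (fun m m' h => ?_) q hq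
    by_contra hne
    exact hdisj m m' hne _ (hi m) (Option.some_injective _ h ▸ hi m')
  · refine ⟨ps, fun m => ⟨(hps m).1, fun e he => ?_, (hps m).2.2⟩, hdisj⟩
    obtain ⟨heG, heF⟩ := Finset.mem_sdiff.1 ((hps m).2.1 e he)
    refine Finset.mem_sdiff.2 ⟨mem_coverGraph_of_forall_ne heG fun j hj => ht ⟨j, ?_⟩, heF⟩
    exact (hps m).eq_of_mem_of_snd_eq (fun w hw => sinkV_not_mem j w (Finset.mem_sdiff.1 hw).1)
      he hj

theorem card_inEdges_coverGraph (Scov : Finset ι) (j : Fin N) :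
    (inEdges (coverGraph Sw elem Scov : Finset (SCV lam u N U ι × _)) (sinkV j)).card =
      lam * (Scov.card + (u + 1)) := by
  let edge : (Fin lam × ι) ⊕ (Fin lam × Fin (u + 1)) → SCV lam u N U ι × SCV lam u N U ι :=
    Sum.elim (fun p => (yV p.1 p.2, sinkV j)) fun p => (zV p.1 p.2, sinkV j)
  have hedge : edge.Injective := by
    rintro (⟨i, w⟩ | ⟨i, c⟩) (⟨i', w'⟩ | ⟨i', c'⟩) h <;> simp_all [edge, yV, zV]
  have hset : inEdges (coverGraph Sw elem Scov) (sinkV j) =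
      ((Finset.univ ×ˢ Scov).disjSum Finset.univ).map ⟨edge, hedge⟩ := by
    ext ⟨v, v'⟩
    simp only [inEdges, Finset.mem_filter, Finset.mem_map, Function.Embedding.coeFn_mk]
    constructor
    · rintro ⟨he, rfl⟩
      rcases (Finset.mem_filter.1 he).2 ⟨j, rfl⟩ with ⟨i, w, hw, rfl⟩ | ⟨i, c, rfl⟩
      · exact ⟨Sum.inl (i, w), by simpa using hw, rfl⟩
      · exact ⟨Sum.inr (i, c), by simp, rfl⟩
    · rintro ⟨(⟨i, w⟩ | ⟨i, c⟩), hmem, h⟩ <;> obtain ⟨rfl, rfl⟩ := Prod.mk.inj h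
      · exact ⟨yV_sinkV_mem_coverGraph (by simpa using hmem) i j, rfl⟩
      · exact ⟨zV_sinkV_mem_coverGraph Scov i c j, rfl⟩
  rw [hset, Finset.card_map, Finset.card_disjSum, Finset.card_product]
  simp [mul_add]

end Cover

end SetCoverReduction

theorem stmt_17_general (lam u N : ℕ)
    {U ι : Type*} [Fintype U] [Fintype ι]
    (Sw : ι → Finset U) (elem : Fin (2 ^ u) ≃ U)
    (Scov : Finset ι)
    (hScov : ∀ x : U, ∃ w ∈ Scov, x ∈ Sw w)
    (H : Finset (SCV lam u N U ι × SCV lam u N U ι))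
    (hH : H = (scGraph lam u N U ι Sw elem).filter fun e =>
      (∃ j : Fin N, e.2 = sinkV j) →
        ((∃ i : Fin lam, ∃ w ∈ Scov, e.1 = yV i w) ∨
          (∃ i : Fin lam, ∃ c : Fin (u + 1), e.1 = zV i c))) :
    IsFTBFP (scGraph lam u N U ι Sw elem) H (Sum.inl ()) lam (u + 1) ∧
    ∀ j : Fin N, (inEdges H (sinkV j)).card = lam * (Scov.card + (u + 1)) := by
  obtain rfl : H = SetCoverReduction.coverGraph Sw elem Scov := hH
  exact ⟨isFTBFP_of_edp_imp (Finset.filter_subset _ _) fun F hF _ _ =>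
      SetCoverReduction.edp_coverGraph_of_edp hScov hF,
    SetCoverReduction.card_inEdges_coverGraph Scov⟩

/-- any set cover `Scov` of `(U, 𝔉)` yields a `(lam, u+1)`-FT-BFP `H`
of the set-cover reduction graph, obtained by restricting the in-edges of every sink
`v_j` to those coming from `A = ⋃_i ({y_{i,W} : W ∈ Scov} ∪ Z_i)`; in `H` every sink
has in-degree exactly `lam * (|Scov| + (u+1))` (note `k = u + 1`). -/
theorem stmt_17 (lam u N : ℕ) (hlam : 1 ≤ lam) (hN : 1 ≤ N)
    {U ι : Type*} [Fintype U] [DecidableEq U] [Fintype ι] [DecidableEq ι]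
    (Sw : ι → Finset U) (elem : Fin (2 ^ u) ≃ U)
    (hcov : ∀ x : U, ∃ w : ι, x ∈ Sw w)
    (Scov : Finset ι)
    (hScov : ∀ x : U, ∃ w ∈ Scov, x ∈ Sw w)
    (H : Finset (SCV lam u N U ι × SCV lam u N U ι))
    (hH : H = (scGraph lam u N U ι Sw elem).filter fun e =>
      (∃ j : Fin N, e.2 = sinkV j) →
        ((∃ i : Fin lam, ∃ w ∈ Scov, e.1 = yV i w) ∨
          (∃ i : Fin lam, ∃ c : Fin (u + 1), e.1 = zV i c))) :
    IsFTBFP (scGraph lam u N U ι Sw elem) H (Sum.inl ()) lam (u + 1) ∧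
    ∀ j : Fin N, (inEdges H (sinkV j)).card = lam * (Scov.card + (u + 1)) :=
  stmt_17_general lam u N Sw elem Scov hScov H hH
end

section
/- Let G be a directed graph with positive integer edge capacities c, and let G* be the unit-capacity multigraph obtained by replacing each edge e by c(e) parallel unit-capacity copies. If H* is a (λ,k)-FT-BFP of the multigraph G*, then the capacitated subgraph H of G consisting of all edges with at least one copy retained in H* (with their original capacities) is a (λ,k)-FT-BFP of G under capacity decrements: for every decrement function I: E(G) → ℕ with Σ_e I(e) ≤ k and c*(e) = c(e) − I(e), and every vertex t, maxflow(s,t,H|c*) = maxflow(s,t,G|c*) if the latter is ≤ λ, and maxflow(s,t,H|c*) ≥ λ otherwise. -/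
open Finset

/-- `p` is a nonempty directed path from `s` to `t` whose edges all satisfy `ok`. -/
def IsPathR {V : Type*} (ok : V × V → Prop) (s t : V) (p : List (V × V)) : Prop :=
  p ≠ [] ∧ (∀ e ∈ p, ok e) ∧ List.Chain' (fun e f => e.2 = f.1) p ∧
    p.head?.map Prod.fst = some s ∧ p.getLast?.map Prod.snd = some t

/-- A capacitated graph `c : V × V → ℕ` (equivalently a multigraph with `c e`
parallel unit-capacity copies of `e`) admits `r` paths from `s` to `t` using each
edge `e` at most `c e` times in total. -/
def EDPc {V : Type*} [Fintype V] [DecidableEq V] (c : V × V → ℕ) (s t : V) (r : ℕ) : Prop :=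
  ∃ ps : Fin r → List (V × V), (∀ i, IsPathR (fun e => 0 < c e) s t (ps i)) ∧
    ∀ e : V × V, (∑ i, (ps i).count e) ≤ c e

/-- Max-flow value under capacities `c`. -/
noncomputable def maxFlowC {V : Type*} [Fintype V] [DecidableEq V]
    (c : V × V → ℕ) (s t : V) : ℕ :=
  sSup {r | EDPc c s t r}

/-- `m` (a sub-multigraph of the unit-capacity multigraph `G*` with multiplicities
`c`) is a `(lam,k)`-FT-BFP of `G*`: for every failure of at most `k` edge copies
(`d e` copies of `e`, in the worst case all taken inside the sub-multigraph), flow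
values up to `lam` from `s` are preserved. -/
def IsFTBFPmulti {V : Type*} [Fintype V] [DecidableEq V]
    (c m : V × V → ℕ) (s : V) (lam k : ℕ) : Prop :=
  (∀ e, m e ≤ c e) ∧
  ∀ d : V × V → ℕ, (∀ e, d e ≤ c e) → (∑ e : V × V, d e) ≤ k → ∀ t : V,
    (maxFlowC (fun e => c e - d e) s t ≤ lam →
      maxFlowC (fun e => m e - d e) s t = maxFlowC (fun e => c e - d e) s t) ∧
    (lam < maxFlowC (fun e => c e - d e) s t →
      lam ≤ maxFlowC (fun e => m e - d e) s t)

lemma edpc_le_total {V : Type*} [Fintype V] [DecidableEq V] (c : V × V → ℕ) (s t : V) (r : ℕ)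
    (h : EDPc c s t r) : r ≤ ∑ e : V × V, c e := by
  obtain ⟨ps, hps, hcount⟩ := h
  calc r = ∑ _i : Fin r, 1 := by simp
    _ ≤ ∑ i : Fin r, ∑ e : V × V, (ps i).count e := by
        apply Finset.sum_le_sum
        intro i _
        obtain ⟨hne, -⟩ := hps i
        obtain ⟨e, he⟩ := List.exists_mem_of_ne_nil _ hne
        calc 1 ≤ (ps i).count e := List.count_pos_iff.mpr he
          _ ≤ ∑ e : V × V, (ps i).count e :=
            Finset.single_le_sum (f := fun e => (ps i).count e)
              (fun _ _ => Nat.zero_le _) (Finset.mem_univ e)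
    _ = ∑ e : V × V, ∑ i, (ps i).count e := Finset.sum_comm
    _ ≤ ∑ e : V × V, c e := Finset.sum_le_sum fun e _ => hcount e

lemma edpc_mono {V : Type*} [Fintype V] [DecidableEq V] {c c' : V × V → ℕ} (s t : V) (r : ℕ)
    (hcc : ∀ e, c e ≤ c' e) (h : EDPc c s t r) : EDPc c' s t r := by
  obtain ⟨ps, hps, hcount⟩ := h
  refine ⟨ps, fun i => ?_, fun e => (hcount e).trans (hcc e)⟩
  obtain ⟨h1, h2, h3, h4, h5⟩ := hps i
  exact ⟨h1, fun e he => lt_of_lt_of_le (h2 e he) (hcc e), h3, h4, h5⟩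

lemma maxFlowC_mono {V : Type*} [Fintype V] [DecidableEq V] {c c' : V × V → ℕ} (s t : V)
    (hcc : ∀ e, c e ≤ c' e) : maxFlowC c s t ≤ maxFlowC c' s t := by
  apply csSup_le_csSup
  · exact ⟨∑ e : V × V, c' e, fun r hr => edpc_le_total c' s t r hr⟩
  · exact ⟨0, fun i => i.elim0, fun i => i.elim0, fun e => by simp⟩
  · exact fun r hr => edpc_mono s t r hcc hr

/-- if `H*` (multiplicities `m`) is a `(lam,k)`-FT-BFP of the
unit-capacity multigraph `G*` obtained from the capacitated graph `c`, then the
capacitated subgraph `h` of `c` keeping, with full original capacity, every edge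
with at least one retained copy, is a `(lam,k)`-FT-BFP of `c` under capacity
decrements: for every decrement `I` with total at most `k` and every vertex `t`,
the max-flow of `h` under capacities `c* = c - I` equals that of `c` under `c*`
when the latter is at most `lam`, and is at least `lam` otherwise. -/
theorem stmt_18 {V : Type*} [Fintype V] [DecidableEq V] (s : V) (lam k : ℕ)
    (c m : V × V → ℕ) (hm : IsFTBFPmulti c m s lam k)
    (h : V × V → ℕ) (hh : h = fun e => if 0 < m e then c e else 0) :
    ∀ I : V × V → ℕ, (∀ e, I e ≤ c e) → (∑ e : V × V, I e) ≤ k → ∀ t : V,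
      (maxFlowC (fun e => c e - I e) s t ≤ lam →
        maxFlowC (fun e => h e - I e) s t = maxFlowC (fun e => c e - I e) s t) ∧
      (lam < maxFlowC (fun e => c e - I e) s t →
        lam ≤ maxFlowC (fun e => h e - I e) s t) := by
  intro I hI hIk t
  have hd := hm.2 I hI hIk t
  have hle1 : ∀ e, m e - I e ≤ h e - I e := by
    intro e; subst hh; dsimp only
    split
    · exact Nat.sub_le_sub_right (hm.1 e) _
    · simp_all [Nat.pos_iff_ne_zero]
  have hle2 : ∀ e, h e - I e ≤ c e - I e := by
    intro e; subst hh; dsimp only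
    split
    · exact le_rfl
    · simp
  have hmono1 := maxFlowC_mono (c := fun e => m e - I e) (c' := fun e => h e - I e) s t hle1
  have hmono2 := maxFlowC_mono (c := fun e => h e - I e) (c' := fun e => c e - I e) s t hle2
  constructor
  · intro hle
    have heq := hd.1 hle
    exact le_antisymm hmono2 (heq ▸ hmono1)
  · intro hlt
    exact (hd.2 hlt).trans hmono1
end
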